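/- arXiv:1309.5170 — 7 statements merged into one kernel-verified Lean document; each statement's English description precedes it below -/
import Mathlib

section
/- For every natural number s ≥ 1 and every real t > 0, the absolute value of the s-th remainder of the Taylor series of exp(-t) satisfies t^s/((s-1)!·(t+s)) < |∑_{k=s}^∞ (-t)^k/k!| < t^s/((s-1)!·(t+s-1)). -/
/-!
Write `J n t = ∫₀ᵗ (t - u)ⁿ e⁻ᵘ du`. Taylor's formula with integral remainder expresses the tail
of the series from `k = n + 1` as `(-1)ⁿ⁺¹ J n t / n!`. For the lower bound, `e⁻ᵘ > (1 - u/t)ᵗ` on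
`(0, t]`, and `∫₀ᵗ (t - u)ⁿ (1 - u/t)ᵗ du = tⁿ⁺¹ / (t + n + 1)` exactly. Integration by parts gives
`J (n + 1) t = tⁿ⁺¹ - (n + 1) J n t`, which turns the lower bound for `J n` into the upper bound
for `J (n + 1)`.
-/

open Real intervalIntegral Nat

noncomputable def expNegTaylorIntegral (n : ℕ) (t : ℝ) : ℝ :=
  ∫ u in (0 : ℝ)..t, (t - u) ^ n * exp (-u)

theorem expNegTaylorIntegral_zero (t : ℝ) : expNegTaylorIntegral 0 t = 1 - exp (-t) := by
  simp [expNegTaylorIntegral, integral_comp_neg fun u => exp u]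

theorem expNegTaylorIntegral_succ (n : ℕ) (t : ℝ) :
    expNegTaylorIntegral (n + 1) t = t ^ (n + 1) - (n + 1) * expNegTaylorIntegral n t := by
  have hu (x : ℝ) : HasDerivAt (fun x => (t - x) ^ (n + 1)) (-((n + 1) * (t - x) ^ n)) x := by
    simpa using ((hasDerivAt_id x).const_sub t).fun_pow (n + 1)
  have hv (x : ℝ) : HasDerivAt (fun x => -exp (-x)) (exp (-x)) x := by
    simpa using ((hasDerivAt_neg x).exp).fun_neg
  have parts := integral_mul_deriv_eq_deriv_mul (a := 0) (b := t) (fun x _ => hu x)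
    (fun x _ => hv x) (by apply Continuous.intervalIntegrable; fun_prop)
    (by apply Continuous.intervalIntegrable; fun_prop)
  simp only [neg_mul_neg, integral_const_mul, mul_assoc] at parts
  simpa [expNegTaylorIntegral] using parts

theorem tsum_pow_div_factorial_add_succ (x : ℝ) (n : ℕ) :
    ∑' k : ℕ, x ^ (k + (n + 1)) / ((k + (n + 1))! : ℝ) =
      ∑' k : ℕ, x ^ (k + n) / ((k + n)! : ℝ) - x ^ n / (n ! : ℝ) := by
  have h := ((summable_nat_add_iff n).mpr (Real.summable_pow_div_factorial x)).tsum_eq_zero_add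
  simp only [zero_add, add_right_comm _ 1 n, add_assoc] at h
  linarith

theorem tsum_neg_pow_div_factorial_add_succ_eq (t : ℝ) (n : ℕ) :
    ∑' k : ℕ, (-t) ^ (k + (n + 1)) / ((k + (n + 1))! : ℝ) =
      (-1) ^ (n + 1) * expNegTaylorIntegral n t / n ! := by
  induction n with
  | zero =>
    rw [tsum_pow_div_factorial_add_succ, expNegTaylorIntegral_zero]
    simp [Real.exp_eq_exp_ℝ, NormedSpace.exp_eq_tsum_div]
  | succ n ih =>
    rw [tsum_pow_div_factorial_add_succ, ih, expNegTaylorIntegral_succ, factorial_succ, neg_pow t]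
    push_cast
    field_simp
    ring

theorem one_sub_div_rpow_lt_exp_neg {t u : ℝ} (hu : 0 < u) (hut : u ≤ t) :
    (1 - u / t) ^ t < exp (-u) := by
  have ht : 0 < t := hu.trans_le hut
  calc (1 - u / t) ^ t < exp (-(u / t)) ^ t := by
        refine rpow_lt_rpow ?_ ?_ ht
        · rw [sub_nonneg, div_le_one ht]; exact hut
        · linarith [add_one_lt_exp (neg_ne_zero.mpr (div_pos hu ht).ne')]
    _ = exp (-u) := by rw [← exp_mul, neg_mul, div_mul_cancel₀ u ht.ne']

theorem integral_sub_pow_mul_one_sub_div_rpow (n : ℕ) {t : ℝ} (ht : 0 < t) :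
    ∫ u in (0 : ℝ)..t, (t - u) ^ n * (1 - u / t) ^ t = t ^ (n + 1) / (t + n + 1) := by
  have hsubst : ∫ u in (0 : ℝ)..t, (t - u) ^ n * (1 - u / t) ^ t =
      ∫ x in (0 : ℝ)..t, x ^ n * (x / t) ^ t := by
    simpa [one_sub_div ht.ne'] using
      integral_comp_sub_left (a := 0) (b := t) (fun x => x ^ n * (x / t) ^ t) t
  have hpow : Set.EqOn (fun x : ℝ => x ^ n * (x / t) ^ t) (fun x => x ^ ((n : ℝ) + t) / t ^ t)
      (Set.uIcc 0 t) := by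
    intro x hx
    have hx0 : 0 ≤ x := by rw [Set.uIcc_of_le ht.le] at hx; exact hx.1
    simp only
    rw [div_rpow hx0 ht.le, rpow_add' hx0 (by positivity), rpow_natCast, mul_div_assoc]
  have hexp : t ^ ((n : ℝ) + t + 1) = t ^ (n + 1) * t ^ t := by
    rw [add_right_comm, rpow_add ht, ← rpow_natCast]; norm_cast
  have hexponent : (-1 : ℝ) < n + t := by linarith [n.cast_nonneg (α := ℝ)]
  rw [hsubst, integral_congr hpow, integral_div, integral_rpow (Or.inl hexponent),
    zero_rpow (by positivity), hexp]
  field_simp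
  ring

theorem lt_expNegTaylorIntegral (n : ℕ) {t : ℝ} (ht : 0 < t) :
    t ^ (n + 1) / (t + n + 1) < expNegTaylorIntegral n t := by
  rw [← integral_sub_pow_mul_one_sub_div_rpow n ht]
  refine integral_lt_integral_of_continuousOn_of_le_of_exists_lt ht ?_ ?_
    (fun u hu => mul_le_mul_of_nonneg_left (one_sub_div_rpow_lt_exp_neg hu.1 hu.2).le
      (pow_nonneg (sub_nonneg.2 hu.2) n))
    ⟨t / 2, ⟨by positivity, by linarith⟩, mul_lt_mul_of_pos_left
      (one_sub_div_rpow_lt_exp_neg (by positivity) (by linarith)) (pow_pos (by linarith) n)⟩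
  · exact ((continuous_const.sub continuous_id).pow n).continuousOn.mul
      ((continuous_const.sub (continuous_id.div_const t)).continuousOn.rpow_const
        fun _ _ => Or.inr ht.le)
  · exact Continuous.continuousOn (by fun_prop)

theorem expNegTaylorIntegral_lt (n : ℕ) {t : ℝ} (ht : 0 < t) :
    expNegTaylorIntegral n t < t ^ (n + 1) / (t + n) := by
  cases n with
  | zero => simpa [expNegTaylorIntegral_zero, ht.ne'] using exp_pos (-t)
  | succ n =>
    have hJ := lt_expNegTaylorIntegral n ht
    rw [expNegTaylorIntegral_succ, lt_div_iff₀ (by positivity)]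
    rw [div_lt_iff₀ (by positivity)] at hJ
    push_cast
    have hn : (0 : ℝ) < n + 1 := by positivity
    linarith [mul_lt_mul_of_pos_left hJ hn, pow_succ t (n + 1)]

/-- For every natural number `s ≥ 1` and every real `t > 0`, the absolute
value of the `s`-th remainder of the Taylor series of `exp (-t)` satisfies
`t^s/((s-1)!·(t+s)) < |∑_{k=s}^∞ (-t)^k/k!| < t^s/((s-1)!·(t+s-1))`. -/
theorem taylor_remainder_bounds (s : ℕ) (hs : 1 ≤ s) (t : ℝ) (ht : 0 < t) :
    t ^ s / ((Nat.factorial (s - 1) : ℝ) * (t + s)) <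
      |∑' k : ℕ, (-t) ^ (k + s) / (Nat.factorial (k + s) : ℝ)| ∧
    |∑' k : ℕ, (-t) ^ (k + s) / (Nat.factorial (k + s) : ℝ)| <
      t ^ s / ((Nat.factorial (s - 1) : ℝ) * (t + s - 1)) := by
  obtain ⟨n, rfl⟩ : ∃ n, s = n + 1 := ⟨s - 1, (Nat.sub_add_cancel hs).symm⟩
  have hlower := lt_expNegTaylorIntegral n ht
  have hupper := expNegTaylorIntegral_lt n ht
  have hfac : (0 : ℝ) < n ! := by positivity
  have habs : |∑' k : ℕ, (-t) ^ (k + (n + 1)) / ((k + (n + 1))! : ℝ)| =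
      expNegTaylorIntegral n t / n ! := by
    have hJ : 0 < expNegTaylorIntegral n t := (by positivity : (0 : ℝ) < _).trans hlower
    rw [tsum_neg_pow_div_factorial_add_succ_eq, mul_div_assoc, abs_mul, abs_neg_one_pow, one_mul,
      abs_of_pos (div_pos hJ hfac)]
  rw [habs]
  simp only [Nat.add_sub_cancel, Nat.cast_add, Nat.cast_one, ← add_assoc, add_sub_cancel_right,
    mul_comm (n ! : ℝ), ← div_div]
  exact ⟨div_lt_div_of_pos_right hlower hfac, div_lt_div_of_pos_right hupper hfac⟩
end

section
/- For every natural number s ≥ 0 and real t > 0 the two-sided bound t/(t+s+1) < h_s(t) < t/(t+s) holds, where h_s(t) := F_{s+1}(t)/p_s(t), p_s(t) = t^s/s!, and F_{s+1}(t) = (-1)^{s+1} ∑_{k=s+1}^∞ (-t)^k/k!. -/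
/-- `F_s(t) = (-1)^s ∑_{k=s}^∞ (-t)^k/k!`, the signed `s`-th Taylor remainder of `exp (-t)`. -/
noncomputable def taylorF (s : ℕ) (t : ℝ) : ℝ :=
  (-1 : ℝ) ^ s * ∑' k : ℕ, (-t) ^ (k + s) / (Nat.factorial (k + s) : ℝ)

/-- `p_s(t) = t^s/s!`. -/
noncomputable def taylorP (s : ℕ) (t : ℝ) : ℝ := t ^ s / (Nat.factorial s : ℝ)

/-- `h_s(t) = F_{s+1}(t)/p_s(t)`. -/
noncomputable def taylorH (s : ℕ) (t : ℝ) : ℝ := taylorF (s + 1) t / taylorP s t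

/-!
Put `K(x) = eˣ F_{s+1}(x)`. Since `F_{s+1}' = F_s = p_s - F_{s+1}`, we have `K(0) = 0` and
`K' = eˣ p_s`. The comparison functions `B_c(x) = eˣ p_s(x) x / (x + c)` also vanish at `0`, and
`B_c' = eˣ p_s (1 + ((s - c) x + c (s + 1 - c)) / (x + c)²)`, which lies below `K'` for `c = s + 1`
and above it for `c = s ≥ 1` when `x > 0`. Hence `B_{s+1}(t) < K(t) < B_s(t)`, which is the claim
after division by `eᵗ p_s(t)`. For `s = 0` the upper bound is just `1 - e⁻ᵗ < 1`.
-/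

open Real Set

lemma taylorF_zero (t : ℝ) : taylorF 0 t = exp (-t) := by
  rw [exp_eq_exp_ℝ, NormedSpace.exp_eq_tsum_div]
  simp [taylorF]

lemma taylorF_succ (s : ℕ) (t : ℝ) : taylorF (s + 1) t = taylorP s t - taylorF s t := by
  have hsplit := ((summable_nat_add_iff s).2 (summable_pow_div_factorial (-t))).tsum_eq_zero_add
  simp only [zero_add, add_right_comm _ 1 s] at hsplit
  have hsign : (-1 : ℝ) ^ s * (-t) ^ s = t ^ s := by rw [← mul_pow]; ring_nf
  unfold taylorF taylorP
  rw [hsplit]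
  linear_combination hsign / (Nat.factorial s : ℝ)

lemma taylorF_succ_zero (s : ℕ) : taylorF (s + 1) 0 = 0 := by
  simp [taylorF]

lemma taylorP_pos (s : ℕ) {t : ℝ} (ht : 0 < t) : 0 < taylorP s t := by
  unfold taylorP; positivity

lemma hasDerivAt_taylorP_succ (s : ℕ) (x : ℝ) :
    HasDerivAt (taylorP (s + 1)) (taylorP s x) x := by
  have hfac : ((s + 1).factorial : ℝ) = (s + 1) * s.factorial := by
    push_cast [Nat.factorial_succ]; ring
  show HasDerivAt (fun y => y ^ (s + 1) / ((s + 1).factorial : ℝ)) _ x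
  refine ((hasDerivAt_pow (s + 1) x).div_const _).congr_deriv ?_
  unfold taylorP
  rw [hfac, Nat.add_sub_cancel]
  push_cast
  field_simp

lemma hasDerivAt_taylorF_succ (s : ℕ) (x : ℝ) :
    HasDerivAt (taylorF (s + 1)) (taylorF s x) x := by
  induction s with
  | zero =>
    have h : taylorF 1 = fun y => 1 - exp (-y) := by
      ext y; rw [taylorF_succ, taylorF_zero]; simp [taylorP]
    rw [h, taylorF_zero]
    simpa using ((hasDerivAt_neg x).exp).const_sub 1
  | succ s ih =>
    have h : taylorF (s + 2) = fun y => taylorP (s + 1) y - taylorF (s + 1) y := by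
      ext y; exact taylorF_succ (s + 1) y
    rw [h, taylorF_succ]
    exact (hasDerivAt_taylorP_succ s x).sub ih

lemma hasDerivAt_exp_mul_taylorF_succ (s : ℕ) (x : ℝ) :
    HasDerivAt (fun y => exp y * taylorF (s + 1) y) (exp x * taylorP s x) x := by
  refine ((hasDerivAt_exp x).mul (hasDerivAt_taylorF_succ s x)).congr_deriv ?_
  rw [taylorF_succ]
  ring

lemma hasDerivAt_exp_mul_taylorP_mul_div (s : ℕ) {c x : ℝ} (hx : x + c ≠ 0) :
    HasDerivAt (fun y => exp y * taylorP s y * y / (y + c))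
      (exp x * taylorP s x * (1 + ((s - c) * x + c * (s + 1 - c)) / (x + c) ^ 2)) x := by
  have hP : ∀ y, taylorP s y * y = (s + 1) * taylorP (s + 1) y := by
    intro y
    unfold taylorP
    push_cast [Nat.factorial_succ, pow_succ]
    field_simp
  simp only [mul_assoc, hP]
  refine (((hasDerivAt_exp x).fun_mul ((hasDerivAt_taylorP_succ s x).const_mul _)).fun_div
    ((hasDerivAt_id' x).add_const c) hx).congr_deriv ?_
  unfold taylorP
  push_cast [Nat.factorial_succ]
  field_simp
  ring

lemma lt_of_hasDerivAt_lt_of_eq {f g f' g' : ℝ → ℝ} {a b : ℝ} (hab : a < b)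
    (hf : ∀ x ∈ Icc a b, HasDerivAt f (f' x) x) (hg : ∀ x ∈ Icc a b, HasDerivAt g (g' x) x)
    (hlt : ∀ x ∈ Ioo a b, f' x < g' x) (ha : f a = g a) : f b < g b := by
  have hmono : StrictMonoOn (g - f) (Icc a b) := by
    refine strictMonoOn_of_deriv_pos (convex_Icc a b) ?_ ?_
    · exact fun x hx => ((hg x hx).sub (hf x hx)).continuousAt.continuousWithinAt
    · intro x hx
      rw [interior_Icc] at hx
      rw [((hg x (Ioo_subset_Icc_self hx)).sub (hf x (Ioo_subset_Icc_self hx))).deriv]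
      exact sub_pos.2 (hlt x hx)
  have := hmono (left_mem_Icc.2 hab.le) (right_mem_Icc.2 hab.le) hab
  simp only [Pi.sub_apply, ha, sub_self, sub_pos] at this
  exact this

lemma div_lt_taylorH (s : ℕ) {t : ℝ} (ht : 0 < t) : t / (t + s + 1) < taylorH s t := by
  have hcmp : exp t * taylorP s t * t / (t + (s + 1)) < exp t * taylorF (s + 1) t := by
    refine lt_of_hasDerivAt_lt_of_eq ht
      (fun x hx => hasDerivAt_exp_mul_taylorP_mul_div s (by linarith [hx.1] : x + (s + 1) ≠ 0))
      (fun x _ => hasDerivAt_exp_mul_taylorF_succ s x) (fun x hx => ?_) (by simp [taylorF_succ_zero])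
    have hx0 : 0 < x := hx.1
    have hpos : 0 < exp x * taylorP s x := mul_pos (exp_pos x) (taylorP_pos s hx0)
    refine mul_lt_of_lt_one_right hpos ?_
    have : ((s - (s + 1)) * x + (s + 1) * (s + 1 - (s + 1))) / (x + (s + 1)) ^ 2 < 0 :=
      div_neg_of_neg_of_pos (by linarith) (by positivity)
    linarith
  rw [taylorH, lt_div_iff₀ (taylorP_pos s ht), ← mul_lt_mul_iff_right₀ (exp_pos t), add_assoc]
  calc exp t * (t / (t + (s + 1)) * taylorP s t) = exp t * taylorP s t * t / (t + (s + 1)) := by ring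
    _ < _ := hcmp

lemma taylorH_lt_div (s : ℕ) {t : ℝ} (ht : 0 < t) : taylorH s t < t / (t + s) := by
  rcases Nat.eq_zero_or_pos s with rfl | hs_pos
  · have : taylorH 0 t = 1 - exp (-t) := by
      simp [taylorH, taylorF_succ, taylorF_zero, taylorP]
    rw [this, Nat.cast_zero, add_zero, div_self ht.ne']
    linarith [exp_pos (-t)]
  have hs : (0 : ℝ) < s := Nat.cast_pos.2 hs_pos
  have hcmp : exp t * taylorF (s + 1) t < exp t * taylorP s t * t / (t + s) := by
    refine lt_of_hasDerivAt_lt_of_eq ht (fun x _ => hasDerivAt_exp_mul_taylorF_succ s x)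
      (fun x hx => hasDerivAt_exp_mul_taylorP_mul_div s (by linarith [hx.1] : x + s ≠ 0))
      (fun x hx => ?_) (by simp [taylorF_succ_zero])
    have hx0 : 0 < x := hx.1
    have hpos : 0 < exp x * taylorP s x := mul_pos (exp_pos x) (taylorP_pos s hx0)
    refine lt_mul_of_one_lt_right hpos ?_
    have : 0 < ((s - s) * x + s * (s + 1 - s)) / (x + s) ^ 2 :=
      div_pos (by nlinarith) (by positivity)
    linarith
  rw [taylorH, div_lt_iff₀ (taylorP_pos s ht), ← mul_lt_mul_iff_right₀ (exp_pos t)]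
  calc exp t * taylorF (s + 1) t < exp t * taylorP s t * t / (t + s) := hcmp
    _ = _ := by ring

/-- For every `s ≥ 0` and `t > 0`,
`t/(t+s+1) < h_s(t) < t/(t+s)`. -/
theorem h_two_sided_bounds (s : ℕ) (t : ℝ) (ht : 0 < t) :
    t / (t + s + 1) < taylorH s t ∧ taylorH s t < t / (t + s) :=
  ⟨div_lt_taylorH s ht, taylorH_lt_div s ht⟩
end

section
/- For s ∈ ℕ, a > 0 and T > a^s, the volume I(s,T,a) of P(s,T,a) := {x ∈ [0,∞)^s : ∏_{j=1}^s(x_j+a) ≤ T} satisfies T(ln T − s ln a)^s / ((s−1)!(ln T + s(1 − ln a))) < I(s,T,a) < T(ln T − s ln a)^s / ((s−1)!(ln T + s(1 − ln a) − 1)). -/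
open MeasureTheory

/-- The corner smooth hyperbolic cross `P(s,T,a) = {x ∈ [0,∞)^s : ∏ (x_j + a) ≤ T}`. -/
def hcP (s : ℕ) (T a : ℝ) : Set (Fin s → ℝ) :=
  {x | (∀ i, 0 ≤ x i) ∧ ∏ i, (x i + a) ≤ T}

/-!
Write `T = a ^ s * exp L` and `Φₙ(L) = ∫₀ᴸ eᵗ tⁿ dt`. Slicing off the first coordinate
`x₁ = a e^{L-v} - a` leaves `P(s-1, a^{s-1} e^v, a)`, so the volumes obey a convolution
recursion with `exp` whose solution is `I(s,T,a) = a^s Φ_{s-1}(L) / (s-1)!`. The two bounds on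
`Φₙ(L)` follow by comparing derivatives: `e^L L^{n+1} / (L + c) - Φₙ(L)` vanishes at `0` and
has derivative `e^L Lⁿ ((L + c)(n + 1 - c) - L) / (L + c)²`, which is negative for `c = n + 1`
and positive for `c = n > 0`.
-/

open Set Real intervalIntegral

lemma pos_of_hasDerivAt_pos {f f' : ℝ → ℝ} {L : ℝ} (hL : 0 < L) (hf0 : f 0 = 0)
    (hf : ∀ t, 0 ≤ t → HasDerivAt f (f' t) t) (hf' : ∀ t, 0 < t → 0 < f' t) :
    0 < f L := by
  have hmono : StrictMonoOn f (Ici 0) :=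
    strictMonoOn_of_deriv_pos (convex_Ici 0)
      (fun t ht => (hf t ht).continuousAt.continuousWithinAt) fun t ht => by
        rw [interior_Ici] at ht
        rw [(hf t (le_of_lt ht)).deriv]
        exact hf' t ht
  simpa [hf0] using hmono self_mem_Ici hL.le hL

noncomputable def expPowIntegral (n : ℕ) (L : ℝ) : ℝ := ∫ t in (0 : ℝ)..L, exp t * t ^ n

namespace expPowIntegral

variable (n : ℕ)

lemma continuous_integrand : Continuous fun t : ℝ => exp t * t ^ n := by fun_prop

lemma hasDerivAt (L : ℝ) : HasDerivAt (expPowIntegral n) (exp L * L ^ n) L :=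
  integral_hasDerivAt_right ((continuous_integrand n).intervalIntegrable 0 L)
    ((continuous_integrand n).stronglyMeasurableAtFilter _ _) (continuous_integrand n).continuousAt

@[fun_prop]
lemma continuous : Continuous (expPowIntegral n) :=
  continuous_iff_continuousAt.2 fun L => (hasDerivAt n L).continuousAt

@[simp] lemma zero_right : expPowIntegral n 0 = 0 := integral_same

lemma zero_left (L : ℝ) : expPowIntegral 0 L = exp L - 1 := by
  simp [expPowIntegral, integral_exp]

lemma nonneg {L : ℝ} (hL : 0 ≤ L) : 0 ≤ expPowIntegral n L :=
  integral_nonneg hL fun t ht => mul_nonneg (exp_nonneg t) (pow_nonneg ht.1 n)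

lemma succ (L : ℝ) :
    expPowIntegral (n + 1) L = exp L * L ^ (n + 1) - (n + 1) * expPowIntegral n L := by
  have hderiv : ∀ t ∈ uIcc 0 L,
      HasDerivAt (fun t => exp t * t ^ (n + 1) - (n + 1) * expPowIntegral n t)
        (exp t * t ^ (n + 1)) t := fun t _ => by
    refine (((hasDerivAt_exp t).mul (hasDerivAt_pow (n + 1) t)).sub
      ((hasDerivAt n t).const_mul ((n : ℝ) + 1))).congr_deriv ?_
    push_cast; ring
  rw [expPowIntegral, integral_eq_sub_of_hasDerivAt hderiv
    ((continuous_integrand _).intervalIntegrable 0 L)]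
  simp

lemma integral_exp_sub_mul (L : ℝ) :
    ∫ r in (0 : ℝ)..L, exp (L - r) * expPowIntegral n r =
      expPowIntegral (n + 1) L / (n + 1) := by
  have hderiv : ∀ r ∈ uIcc 0 L, HasDerivAt
      (fun r => exp L * r ^ (n + 1) / (n + 1) - exp (L - r) * expPowIntegral n r)
      (exp (L - r) * expPowIntegral n r) r := fun r _ => by
    refine ((((hasDerivAt_pow (n + 1) r).const_mul (exp L)).div_const ((n : ℝ) + 1)).sub
      ((((hasDerivAt_id r).const_sub L).exp).mul (hasDerivAt n r))).congr_deriv ?_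
    rw [show exp L = exp (L - r) * exp r by rw [← exp_add, sub_add_cancel]]
    simp only [id]
    field_simp
    push_cast
    ring
  rw [integral_eq_sub_of_hasDerivAt hderiv
    (((continuous_const.sub continuous_id).rexp.mul (continuous n)).intervalIntegrable 0 L), succ]
  field_simp
  simp

lemma hasDerivAt_exp_mul_pow_div_sub {c t : ℝ} (h : t + c ≠ 0) :
    HasDerivAt (fun t => exp t * t ^ (n + 1) / (t + c) - expPowIntegral n t)
      (exp t * t ^ n * ((t + c) * (n + 1 - c) - t) / (t + c) ^ 2) t := by
  refine ((((hasDerivAt_exp t).mul (hasDerivAt_pow (n + 1) t)).div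
    ((hasDerivAt_id t).add_const c) h).sub (hasDerivAt n t)).congr_deriv ?_
  simp only [id, Pi.mul_apply]
  field_simp
  push_cast
  ring

lemma exp_mul_pow_div_lt {L : ℝ} (hL : 0 < L) :
    exp L * L ^ (n + 1) / (L + (n + 1)) < expPowIntegral n L := by
  have hderiv (t : ℝ) (ht : 0 ≤ t) : HasDerivAt
      (fun t => expPowIntegral n t - exp t * t ^ (n + 1) / (t + (n + 1)))
      (exp t * t ^ n * t / (t + (n + 1)) ^ 2) t := by
    refine ((hasDerivAt_exp_mul_pow_div_sub n (c := n + 1) (by positivity)).neg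
      |>.congr_of_eventuallyEq (.of_forall fun t => (neg_sub _ _).symm)).congr_deriv ?_
    ring
  have := pos_of_hasDerivAt_pos hL (by simp) hderiv fun t ht => by positivity
  exact sub_pos.1 this

lemma lt_exp_mul_pow_div {L : ℝ} (hL : 0 < L) :
    expPowIntegral n L < exp L * L ^ (n + 1) / (L + n) := by
  rcases n.eq_zero_or_pos with rfl | hn
  · rw [zero_left, CharP.cast_eq_zero, add_zero, pow_one, mul_div_cancel_right₀ _ hL.ne']
    linarith
  have hderiv (t : ℝ) (ht : 0 ≤ t) : HasDerivAt
      (fun t => exp t * t ^ (n + 1) / (t + n) - expPowIntegral n t)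
      (exp t * t ^ n * n / (t + n) ^ 2) t :=
    (hasDerivAt_exp_mul_pow_div_sub n (c := n) (by positivity)).congr_deriv (by ring)
  have := pos_of_hasDerivAt_pos hL (by simp) hderiv fun t ht => by positivity
  exact sub_pos.1 this

end expPowIntegral

lemma volume_eq_lintegral_volume_cons {s : ℕ} {S : Set (Fin (s + 1) → ℝ)}
    (hS : MeasurableSet S) :
    volume S = ∫⁻ y, volume {z : Fin s → ℝ | Fin.cons y z ∈ S} := by
  have he := (volume_preserving_piFinSuccAbove (fun _ : Fin (s + 1) => ℝ) 0).symm
  rw [← he.measure_preimage_equiv S, Measure.volume_eq_prod,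
    Measure.prod_apply (hS.preimage (MeasurableEquiv.measurable _))]
  congr! with y
  simp [MeasurableEquiv.piFinSuccAbove, Fin.insertNthEquiv, Fin.insertNth_zero']
  rfl

lemma measurableSet_hcP (s : ℕ) (T a : ℝ) : MeasurableSet (hcP s T a) := by
  simp only [hcP, ofPred_and, ofPred_forall]
  exact (MeasurableSet.iInter fun i =>
    measurableSet_le measurable_const (measurable_pi_apply i)).inter
      (measurableSet_le (by fun_prop) measurable_const)

lemma hcP_eq_empty {s : ℕ} {T a : ℝ} (ha : 0 ≤ a) (hT : T < a ^ s) : hcP s T a = ∅ := by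
  refine eq_empty_of_forall_notMem fun x ⟨hx, hprod⟩ => hT.not_ge (le_trans ?_ hprod)
  simpa using Finset.prod_le_prod (s := Finset.univ) (fun _ _ => ha)
    fun i _ => le_add_of_nonneg_left (hx i)

lemma volume_hcP_zero {T : ℝ} (a : ℝ) (hT : 1 ≤ T) : volume (hcP 0 T a) = 1 := by
  have : hcP 0 T a = univ := by simp [hcP, hT]
  simp [this, volume_pi]

lemma cons_mem_hcP_succ_iff {s : ℕ} {T a y : ℝ} (ha : 0 < a) (z : Fin s → ℝ) :
    Fin.cons y z ∈ hcP (s + 1) T a ↔ 0 ≤ y ∧ z ∈ hcP s (T / (y + a)) a := by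
  simp only [hcP, mem_ofPred_eq, Fin.forall_fin_succ, Fin.cons_zero, Fin.cons_succ,
    Fin.prod_univ_succ, and_assoc]
  refine and_congr_right fun hy => and_congr_right fun _ => ?_
  rw [le_div_iff₀ (by positivity), mul_comm]

/-- Fubini in the first coordinate `y`, followed by the substitution `y = a * exp (L - v) - a`,
under which the slice becomes `P(s, a ^ s * exp v, a)`. -/
lemma volume_hcP_succ_eq_setLIntegral {s : ℕ} {a : ℝ} (ha : 0 < a) {L : ℝ} (hL : 0 ≤ L) :
    volume (hcP (s + 1) (a ^ (s + 1) * exp L) a) =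
      ∫⁻ v in Icc 0 L, ENNReal.ofReal (a * exp (L - v)) * volume (hcP s (a ^ s * exp v) a) := by
  set T := a ^ (s + 1) * exp L
  set φ : ℝ → ℝ := fun v => a * exp (L - v) - a
  have hφ : StrictAnti φ := fun v w hvw => by simp only [φ]; gcongr
  have hφ' (v : ℝ) : HasDerivAt φ (-(a * exp (L - v))) v :=
    ((((hasDerivAt_id v).const_sub L).exp).const_mul a).sub_const a |>.congr_deriv (by simp)
  have himage : φ '' Icc 0 L = Icc 0 (a * exp L - a) := by
    rw [(by fun_prop : Continuous φ).continuousOn.image_Icc_of_antitoneOn hL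
      (hφ.antitone.antitoneOn _)]
    simp [φ]
  have hslice : (fun y => volume {z : Fin s → ℝ | Fin.cons y z ∈ hcP (s + 1) T a}) =
      (Icc 0 (a * exp L - a)).indicator fun y => volume (hcP s (T / (y + a)) a) := by
    ext y
    simp only [cons_mem_hcP_succ_iff ha]
    by_cases hy : y ∈ Icc 0 (a * exp L - a)
    · simp [hy.1, indicator_of_mem hy]
    rw [indicator_of_notMem hy]
    by_cases hy0 : 0 ≤ y
    · have hT : T / (y + a) < a ^ s := by
        rw [div_lt_iff₀ (by positivity)]
        have : a * exp L < y + a := by simp [hy0] at hy; linarith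
        calc T = a ^ s * (a * exp L) := by ring
          _ < a ^ s * (y + a) := by gcongr
      simp [hy0, hcP_eq_empty ha.le hT]
    · simp [hy0]
  rw [volume_eq_lintegral_volume_cons (measurableSet_hcP _ _ _), hslice,
    lintegral_indicator measurableSet_Icc, ← himage,
    lintegral_image_eq_lintegral_abs_deriv_mul measurableSet_Icc
      (fun v _ => (hφ' v).hasDerivWithinAt) hφ.injective.injOn]
  refine setLIntegral_congr_fun measurableSet_Icc fun v _ => ?_
  have hT : T / (φ v + a) = a ^ s * exp v := by
    simp only [T, φ, sub_add_cancel, exp_sub]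
    field_simp
    ring
  rw [hT, abs_neg, abs_of_pos (by positivity)]

lemma setLIntegral_Icc_ofReal {f : ℝ → ℝ} {a b : ℝ} (hab : a ≤ b)
    (hf : ContinuousOn f (Icc a b)) (hnn : ∀ x ∈ Icc a b, 0 ≤ f x) :
    ∫⁻ x in Icc a b, ENNReal.ofReal (f x) = ENNReal.ofReal (∫ x in a..b, f x) := by
  rw [← ofReal_integral_eq_lintegral_ofReal (hf.integrableOn_Icc)
    ((ae_restrict_iff' measurableSet_Icc).2 (.of_forall hnn)),
    integral_Icc_eq_integral_Ioc, integral_of_le hab]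

open scoped Nat in
theorem volume_hcP_exp {a : ℝ} (ha : 0 < a) (n : ℕ) {L : ℝ} (hL : 0 ≤ L) :
    volume (hcP (n + 1) (a ^ (n + 1) * exp L) a) =
      ENNReal.ofReal (a ^ (n + 1) / n ! * expPowIntegral n L) := by
  induction n generalizing L with
  | zero =>
    rw [volume_hcP_succ_eq_setLIntegral ha hL,
      setLIntegral_congr_fun measurableSet_Icc fun v hv => by
        rw [volume_hcP_zero a (by simpa using one_le_exp hv.1), mul_one],
      setLIntegral_Icc_ofReal hL (by fun_prop) fun v _ => by positivity]
    simp [expPowIntegral.zero_left, integral_comp_sub_left, integral_exp]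
  | succ n ih =>
    rw [volume_hcP_succ_eq_setLIntegral ha hL,
      setLIntegral_congr_fun measurableSet_Icc fun v hv => by
        rw [ih hv.1, ← ENNReal.ofReal_mul (by positivity)],
      setLIntegral_Icc_ofReal hL (by fun_prop) fun v hv =>
        by have := expPowIntegral.nonneg n hv.1; positivity]
    congr 1
    simp_rw [show ∀ v, a * exp (L - v) * (a ^ (n + 1) / n ! * expPowIntegral n v) =
      a ^ (n + 2) / n ! * (exp (L - v) * expPowIntegral n v) from fun v => by ring]
    rw [intervalIntegral.integral_const_mul, expPowIntegral.integral_exp_sub_mul,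
      Nat.factorial_succ]
    push_cast
    field_simp

/-- for `s ∈ ℕ`, `a > 0` and `T > a^s`, with `I(s,T,a)` the volume of
`P(s,T,a)`:
`T(ln T − s ln a)^s / ((s−1)!(ln T + s(1 − ln a))) < I(s,T,a)
  < T(ln T − s ln a)^s / ((s−1)!(ln T + s(1 − ln a) − 1))`. -/
theorem volume_hcP_bounds (s : ℕ) (hs : 1 ≤ s) (a T : ℝ) (ha : 0 < a)
    (hT : a ^ s < T) :
    T * (Real.log T - s * Real.log a) ^ s /
        ((Nat.factorial (s - 1) : ℝ) * (Real.log T + s * (1 - Real.log a))) <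
      (volume (hcP s T a)).toReal ∧
    (volume (hcP s T a)).toReal <
      T * (Real.log T - s * Real.log a) ^ s /
        ((Nat.factorial (s - 1) : ℝ) * (Real.log T + s * (1 - Real.log a) - 1)) := by
  obtain ⟨n, rfl⟩ : ∃ n, s = n + 1 := ⟨s - 1, by omega⟩
  have hL : 0 < log T - (n + 1 : ℕ) * log a := by
    rw [← Real.log_pow, sub_pos]
    exact log_lt_log (by positivity) hT
  set L := log T - (n + 1 : ℕ) * log a
  have hT_eq : T = a ^ (n + 1) * exp L := by
    rw [exp_sub, ← Real.log_pow, exp_log (by linarith [pow_pos ha (n + 1)]),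
      exp_log (by positivity)]
    field_simp
  have hvol : (volume (hcP (n + 1) T a)).toReal =
      a ^ (n + 1) / n.factorial * expPowIntegral n L := by
    rw [hT_eq, volume_hcP_exp ha n hL.le,
      ENNReal.toReal_ofReal (by have := expPowIntegral.nonneg n hL.le; positivity)]
  have hscale (c : ℝ) : T * L ^ (n + 1) / (n.factorial * (L + c)) =
      a ^ (n + 1) / n.factorial * (exp L * L ^ (n + 1) / (L + c)) := by
    rw [div_mul_div_comm, hT_eq, mul_assoc]
  have hc : 0 < a ^ (n + 1) / n.factorial := by positivity
  have hden : log T + (n + 1 : ℕ) * (1 - log a) = L + (n + 1) := by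
    simp only [L]; push_cast; ring
  rw [Nat.add_sub_cancel, hvol, hden, add_sub_assoc, add_sub_cancel_right, hscale, hscale]
  exact ⟨mul_lt_mul_of_pos_left (expPowIntegral.exp_mul_pow_div_lt n hL) hc,
    mul_lt_mul_of_pos_left (expPowIntegral.lt_exp_mul_pow_div n hL) hc⟩
end

section
/- For every s ∈ ℕ, a > 0, 0 < δ ≤ 1 with δ < a, and T > 0, the cardinality of the corner hyperbolic cross satisfies |Γ(s,T,a)| < δ^{-1} · T^{1 + 1/δ} · (a − δ)^{-s/δ}, where Γ(s,T,a) := {k ∈ ℕ₀^s : ∏_{i=1}^s (k_i + a) ≤ T}. -/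
/-- The corner hyperbolic cross `Γ(s,T,a) = {k ∈ ℕ₀^s : ∏ (k_i + a) ≤ T}`. -/
def hcGamma (s : ℕ) (T a : ℝ) : Set (Fin s → ℕ) :=
  {k | ∏ i, ((k i : ℝ) + a) ≤ T}

open Real Finset

/-!
Splitting off the first coordinate covers `Γ(s+1,T,a)` by the slices `{n} × Γ(s,T/(n+a),a)`,
so by induction on `s` the bound reduces to the series `∑ₙ (n+a)^(-(1+1/δ))`. Bernoulli's
inequality with exponent `1/δ ≥ 1` gives `x^(-(1+1/δ)) ≤ (x-δ)^(-1/δ) - x^(-1/δ)` for `δ < x`,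
and as `n + a ≤ n + 1 + a - δ` the series telescopes to strictly less than `(a-δ)^(-1/δ)`. The induction starts at `s = 0`, where
the bound holds only with `≤`; the telescoping makes every later step strict.
-/

section Counting

variable {a : ℝ}

lemma pow_le_of_mem_hcGamma (ha : 0 ≤ a) {s : ℕ} {T : ℝ} {k : Fin s → ℕ}
    (hk : k ∈ hcGamma s T a) : a ^ s ≤ T :=
  calc a ^ s = ∏ _i : Fin s, a := by simp
    _ ≤ ∏ i, ((k i : ℝ) + a) :=
      prod_le_prod (fun _ _ => ha) fun i _ => le_add_of_nonneg_left (Nat.cast_nonneg _)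
    _ ≤ T := hk

lemma exists_hcGamma_succ_subset (ha : 0 < a) (s : ℕ) (T : ℝ) : ∃ M : ℕ,
    hcGamma (s + 1) T a ⊆ ⋃ n ∈ range M, Fin.cons n '' hcGamma s (T / (n + a)) a := by
  obtain ⟨M, hM⟩ := exists_nat_gt (T / a ^ s)
  refine ⟨M, fun k hk => ?_⟩
  have hk0 : (0 : ℝ) < k 0 + a := by positivity
  have htail : Fin.tail k ∈ hcGamma s (T / (k 0 + a)) a := by
    show ∏ i, ((Fin.tail k i : ℝ) + a) ≤ T / (k 0 + a)
    rw [le_div_iff₀ hk0, mul_comm]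
    simpa [hcGamma, Fin.prod_univ_succ, Fin.tail] using hk
  have hk0M : k 0 < M := by
    have h := pow_le_of_mem_hcGamma ha.le htail
    rw [le_div_iff₀ hk0, ← le_div_iff₀' (by positivity)] at h
    exact_mod_cast (le_add_of_nonneg_right ha.le).trans h |>.trans_lt hM
  simp only [Set.mem_iUnion, Set.mem_image, mem_range]
  exact ⟨k 0, hk0M, Fin.tail k, htail, Fin.cons_self_tail k⟩

lemma hcGamma_finite (ha : 0 < a) (s : ℕ) (T : ℝ) : (hcGamma s T a).Finite := by
  induction s generalizing T with
  | zero => exact Set.toFinite _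
  | succ s ih =>
    obtain ⟨M, hM⟩ := exists_hcGamma_succ_subset ha s T
    exact (Set.Finite.biUnion (range M).finite_toSet fun n _ => (ih _).image _).subset hM

lemma exists_ncard_hcGamma_succ_le (ha : 0 < a) (s : ℕ) (T : ℝ) : ∃ M : ℕ,
    (hcGamma (s + 1) T a).ncard ≤ ∑ n ∈ range M, (hcGamma s (T / (n + a)) a).ncard := by
  obtain ⟨M, hM⟩ := exists_hcGamma_succ_subset ha s T
  refine ⟨M, (Set.ncard_le_ncard hM ?_).trans ((set_ncard_biUnion_le _ _).trans_eq ?_)⟩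
  · exact Set.Finite.biUnion (range M).finite_toSet fun n _ => (hcGamma_finite ha _ _).image _
  · simp only [Set.ncard_image_of_injective _ (Fin.cons_right_injective _)]

end Counting

section Series

variable {a δ : ℝ}

lemma one_add_mul_le_one_sub_rpow_neg {t p : ℝ} (ht0 : 0 ≤ t) (ht1 : t < 1) (hp : 1 ≤ p) :
    1 + p * t ≤ (1 - t) ^ (-p) :=
  calc 1 + p * t ≤ (1 + t) ^ p := one_add_mul_self_le_rpow_one_add (by linarith) hp
    _ ≤ (1 - t)⁻¹ ^ p := by
      refine rpow_le_rpow (by linarith) ?_ (by linarith)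
      rw [← one_div, le_div_iff₀ (by linarith)]
      nlinarith
    _ = (1 - t) ^ (-p) := by rw [inv_rpow (by linarith), rpow_neg (by linarith)]

lemma rpow_neg_one_add_le_sub (hδ0 : 0 < δ) (hδ1 : δ ≤ 1) {x : ℝ} (hδx : δ < x) :
    x ^ (-(1 + 1 / δ)) ≤ (x - δ) ^ (-(1 / δ)) - x ^ (-(1 / δ)) := by
  have hx : 0 < x := hδ0.trans hδx
  have hbernoulli := one_add_mul_le_one_sub_rpow_neg (div_nonneg hδ0.le hx.le)
    ((div_lt_one hx).2 hδx) (one_le_one_div hδ0 hδ1)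
  have hsplit : x ^ (-(1 + 1 / δ)) = x ^ (-(1 / δ)) * (1 / δ * (δ / x)) := by
    rw [neg_add, rpow_add hx, rpow_neg_one]
    field_simp
  have hfactor : (x - δ) ^ (-(1 / δ)) = x ^ (-(1 / δ)) * (1 - δ / x) ^ (-(1 / δ)) := by
    rw [← mul_rpow hx.le (by rw [sub_nonneg, div_le_one hx]; exact hδx.le)]
    congr 1
    field_simp
  rw [hsplit, hfactor]
  nlinarith [mul_le_mul_of_nonneg_left hbernoulli (rpow_pos_of_pos hx (-(1 / δ))).le]

lemma sum_range_rpow_neg_lt (hδ0 : 0 < δ) (hδ1 : δ ≤ 1) (hδa : δ < a) (M : ℕ) :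
    ∑ n ∈ range M, ((n : ℝ) + a) ^ (-(1 + 1 / δ)) < (a - δ) ^ (-(1 / δ)) := by
  set w : ℕ → ℝ := fun n => ((n : ℝ) + a - δ) ^ (-(1 / δ))
  have hterm (n : ℕ) : ((n : ℝ) + a) ^ (-(1 + 1 / δ)) ≤ w n - w (n + 1) := by
    have hn : (0 : ℝ) ≤ n := n.cast_nonneg
    have hmono : w (n + 1) ≤ ((n : ℝ) + a) ^ (-(1 / δ)) :=
      rpow_le_rpow_of_nonpos (by linarith) (by push_cast; linarith)
        (neg_nonpos.2 (by positivity))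
    linarith [rpow_neg_one_add_le_sub hδ0 hδ1 (show δ < n + a by linarith)]
  calc ∑ n ∈ range M, ((n : ℝ) + a) ^ (-(1 + 1 / δ))
      ≤ ∑ n ∈ range M, (w n - w (n + 1)) := sum_le_sum fun n _ => hterm n
    _ = w 0 - w M := sum_range_sub' w M
    _ < w 0 := sub_lt_self _ (rpow_pos_of_pos (by linarith [M.cast_nonneg (α := ℝ)]) _)
    _ = (a - δ) ^ (-(1 / δ)) := by simp [w]

end Series

section Bound

variable {a δ : ℝ}

lemma ncard_hcGamma_zero_le (hδ0 : 0 < δ) (hδ1 : δ ≤ 1) {T : ℝ} (hT : 0 < T) :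
    ((hcGamma 0 T a).ncard : ℝ) ≤ δ⁻¹ * T ^ (1 + 1 / δ) := by
  rcases lt_or_ge T 1 with hT1 | hT1
  · have hempty : hcGamma 0 T a = ∅ :=
      Set.eq_empty_of_forall_notMem fun k hk => hT1.not_ge (by simpa [hcGamma] using hk)
    rw [hempty, Set.ncard_empty, Nat.cast_zero]
    positivity
  · calc ((hcGamma 0 T a).ncard : ℝ) ≤ 1 := by exact_mod_cast Set.ncard_le_one_of_subsingleton _
      _ ≤ δ⁻¹ * T ^ (1 + 1 / δ) :=
        one_le_mul_of_one_le_of_one_le ((one_le_inv₀ hδ0).2 hδ1)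
          (one_le_rpow hT1 (by positivity))

lemma ncard_hcGamma_succ_lt (hδ0 : 0 < δ) (hδ1 : δ ≤ 1) (hδa : δ < a) {s : ℕ}
    (ih : ∀ T, 0 < T →
      ((hcGamma s T a).ncard : ℝ) ≤ δ⁻¹ * T ^ (1 + 1 / δ) * (a - δ) ^ (-(s : ℝ) / δ))
    {T : ℝ} (hT : 0 < T) :
    ((hcGamma (s + 1) T a).ncard : ℝ) <
      δ⁻¹ * T ^ (1 + 1 / δ) * (a - δ) ^ (-((s + 1 : ℕ) : ℝ) / δ) := by
  have ha : 0 < a := hδ0.trans hδa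
  have hb : 0 < a - δ := sub_pos.2 hδa
  obtain ⟨M, hM⟩ := exists_ncard_hcGamma_succ_le ha s T
  set C := δ⁻¹ * T ^ (1 + 1 / δ) * (a - δ) ^ (-(s : ℝ) / δ)
  have hC : 0 < C := by have := rpow_pos_of_pos hb (-(s : ℝ) / δ); positivity
  calc ((hcGamma (s + 1) T a).ncard : ℝ)
      ≤ ∑ n ∈ range M, ((hcGamma s (T / (n + a)) a).ncard : ℝ) := by exact_mod_cast hM
    _ ≤ ∑ n ∈ range M, C * ((n : ℝ) + a) ^ (-(1 + 1 / δ)) := by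
      refine sum_le_sum fun n _ => (ih _ (by positivity)).trans_eq ?_
      rw [div_rpow hT.le (by positivity), rpow_neg (by positivity)]
      ring
    _ = C * ∑ n ∈ range M, ((n : ℝ) + a) ^ (-(1 + 1 / δ)) := (mul_sum _ _ _).symm
    _ < C * (a - δ) ^ (-(1 / δ)) :=
      mul_lt_mul_of_pos_left (sum_range_rpow_neg_lt hδ0 hδ1 hδa M) hC
    _ = δ⁻¹ * T ^ (1 + 1 / δ) * (a - δ) ^ (-((s + 1 : ℕ) : ℝ) / δ) := by
      rw [mul_assoc, ← rpow_add hb]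
      push_cast
      ring_nf

lemma ncard_hcGamma_le (hδ0 : 0 < δ) (hδ1 : δ ≤ 1) (hδa : δ < a) (s : ℕ) {T : ℝ}
    (hT : 0 < T) :
    ((hcGamma s T a).ncard : ℝ) ≤ δ⁻¹ * T ^ (1 + 1 / δ) * (a - δ) ^ (-(s : ℝ) / δ) := by
  induction s generalizing T with
  | zero => simpa using ncard_hcGamma_zero_le hδ0 hδ1 hT
  | succ s ih => exact (ncard_hcGamma_succ_lt hδ0 hδ1 hδa (fun _ => ih) hT).le

end Bound

theorem hcGamma_card_explicit_general (s : ℕ) (hs : 1 ≤ s) (a δ T : ℝ)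
    (hδ0 : 0 < δ) (hδ1 : δ ≤ 1) (hδa : δ < a) (hT : 0 < T) :
    ((hcGamma s T a).ncard : ℝ) <
      δ⁻¹ * T ^ (1 + 1 / δ) * (a - δ) ^ (-(s : ℝ) / δ) := by
  obtain ⟨s, rfl⟩ := Nat.exists_eq_add_of_le' hs
  exact ncard_hcGamma_succ_lt hδ0 hδ1 hδa (fun _ => ncard_hcGamma_le hδ0 hδ1 hδa s) hT

/-- for `s ∈ ℕ`, `a > 0`, `0 < δ ≤ 1` with `δ < a`, and `T > 0`,
`|Γ(s,T,a)| < δ⁻¹ · T^(1 + 1/δ) · (a − δ)^(−s/δ)`. -/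
theorem hcGamma_card_explicit (s : ℕ) (hs : 1 ≤ s) (a δ T : ℝ) (ha : 0 < a)
    (hδ0 : 0 < δ) (hδ1 : δ ≤ 1) (hδa : δ < a) (hT : 0 < T) :
    ((hcGamma s T a).ncard : ℝ) <
      δ⁻¹ * T ^ (1 + 1 / δ) * (a - δ) ^ (-(s : ℝ) / δ) :=
  hcGamma_card_explicit_general s hs a δ T hδ0 hδ1 hδa hT
end

section
/- For every s ∈ ℕ, a > 0, 0 < δ ≤ 1 with δ < a, and T > 0, the cardinality of the symmetric hyperbolic cross satisfies |Γ_±(s,T,a)| < 2δ^{-1} · T^{1 + 2/δ} · (a − δ)^{-2s/δ}, where Γ_±(s,T,a) := {k ∈ ℤ^s : ∏_{i=1}^s (|k_i| + a) ≤ T}. -/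
/-!
Rankin's trick: with `μ = 2/δ`, every `k ∈ Γ_±(s,T,a)` satisfies
`1 ≤ T^(1+μ) ∏ (|k_i| + a)^(-(1+μ))`, so summing over `k` bounds the cardinality by
`T^(1+μ) (∑_{n ∈ ℤ} (|n| + a)^(-(1+μ)))^s`. Comparing with the telescoping sum of
`μ⁻¹ ((b-1)^(-μ) - b^(-μ))` gives `∑_n (|n| + a)^(-(1+μ)) ≤ a^(-(1+μ)) + 2μ⁻¹ a^(-μ)`,
and Bernoulli's inequality bounds this by `(a - δ)^(-μ)`.
-/

/-- The symmetric hyperbolic cross `Γ_±(s,T,a) = {k ∈ ℤ^s : ∏ (|k_i| + a) ≤ T}`. -/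
def hcGammaSym (s : ℕ) (T a : ℝ) : Set (Fin s → ℤ) :=
  {k | ∏ i, ((|k i| : ℝ) + a) ≤ T}

open Real Finset

theorem mul_rpow_neg_one_add_le_rpow_neg_sub_rpow_neg {μ b : ℝ} (hμ : 0 ≤ μ) (hb : 0 < b) :
    μ * (b + 1) ^ (-(1 + μ)) ≤ b ^ (-μ) - (b + 1) ^ (-μ) := by
  have hb1 : 0 < b + 1 := by linarith
  -- Bernoulli with exponent `1 + μ ≥ 1` gives `((b + 1) / b) ^ (1 + μ) ≥ (b + 1 + μ) / b`.
  have bernoulli := one_add_mul_self_le_rpow_one_add (s := b⁻¹) (by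
    have := inv_pos.2 hb; linarith) (p := 1 + μ) (by linarith)
  rw [show 1 + b⁻¹ = (b + 1) / b by field_simp, div_rpow hb1.le hb.le,
    rpow_add hb1, rpow_add hb, rpow_one, rpow_one, le_div_iff₀ (by positivity),
    show (1 + (1 + μ) * b⁻¹) * (b * b ^ μ) = (b + 1 + μ) * b ^ μ by field_simp; ring] at bernoulli
  rw [rpow_neg hb.le, rpow_neg hb1.le, rpow_neg hb1.le, rpow_add hb1, rpow_one]
  have := rpow_pos_of_pos hb μ
  have := rpow_pos_of_pos hb1 μ
  field_simp
  linarith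

theorem Int.Icc_neg_succ_succ (M : ℕ) :
    Icc (-((M + 1 : ℕ) : ℤ)) ((M + 1 : ℕ) : ℤ) =
      insert (-((M : ℤ) + 1)) (insert ((M : ℤ) + 1) (Icc (-(M : ℤ)) M)) := by
  ext n
  simp only [mem_Icc, mem_insert]
  omega

theorem sum_Icc_rpow_abs_add_le {μ a : ℝ} (hμ : 0 < μ) (ha : 0 < a) (M : ℕ) :
    ∑ n ∈ Icc (-(M : ℤ)) M, (|(n : ℝ)| + a) ^ (-(1 + μ)) ≤
      a ^ (-(1 + μ)) + 2 * μ⁻¹ * (a ^ (-μ) - (M + a) ^ (-μ)) := by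
  induction M with
  | zero => simp
  | succ M ih =>
    have step :=
      mul_rpow_neg_one_add_le_rpow_neg_sub_rpow_neg hμ.le (by positivity : 0 < (M : ℝ) + a)
    rw [← le_div_iff₀' hμ, div_eq_inv_mul] at step
    rw [Int.Icc_neg_succ_succ, sum_insert (by simp; omega), sum_insert (by simp)]
    push_cast
    rw [abs_neg, abs_of_nonneg (by positivity), add_right_comm]
    linarith

theorem sum_rpow_abs_add_le {μ a : ℝ} (hμ : 0 < μ) (ha : 0 < a) (t : Finset ℤ) :
    ∑ n ∈ t, (|(n : ℝ)| + a) ^ (-(1 + μ)) ≤ a ^ (-(1 + μ)) + 2 * μ⁻¹ * a ^ (-μ) := by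
  set M := t.sup Int.natAbs
  have ht : t ⊆ Icc (-(M : ℤ)) M := fun n hn ↦ by
    have : n.natAbs ≤ M := le_sup (f := Int.natAbs) hn
    rw [mem_Icc]
    omega
  have : 0 ≤ ((M : ℝ) + a) ^ (-μ) := by positivity
  calc ∑ n ∈ t, (|(n : ℝ)| + a) ^ (-(1 + μ))
      ≤ ∑ n ∈ Icc (-(M : ℤ)) M, (|(n : ℝ)| + a) ^ (-(1 + μ)) :=
        sum_le_sum_of_subset_of_nonneg ht fun n _ _ ↦ by positivity
    _ ≤ a ^ (-(1 + μ)) + 2 * μ⁻¹ * (a ^ (-μ) - (M + a) ^ (-μ)) := sum_Icc_rpow_abs_add_le hμ ha M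
    _ ≤ a ^ (-(1 + μ)) + 2 * μ⁻¹ * a ^ (-μ) := by gcongr; linarith

theorem Finset.sum_prod_apply_le_pow {ι α R : Type*} [Fintype ι] [DecidableEq ι] [DecidableEq α]
    [CommSemiring R] [PartialOrder R] [IsOrderedRing R] {w : α → R} (hw : ∀ x, 0 ≤ w x) {C : R}
    (hC : ∀ t : Finset α, ∑ x ∈ t, w x ≤ C) (F : Finset (ι → α)) :
    ∑ k ∈ F, ∏ i, w (k i) ≤ C ^ Fintype.card ι := by
  have hF : F ⊆ Fintype.piFinset fun i ↦ F.image (· i) := fun k hk ↦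
    Fintype.mem_piFinset.2 fun i ↦ mem_image_of_mem _ hk
  calc ∑ k ∈ F, ∏ i, w (k i)
      ≤ ∑ k ∈ Fintype.piFinset fun i ↦ F.image (· i), ∏ i, w (k i) :=
        sum_le_sum_of_subset_of_nonneg hF fun k _ _ ↦ prod_nonneg fun i _ ↦ hw _
    _ = ∏ i, ∑ x ∈ F.image (· i), w x := (prod_univ_sum _ _).symm
    _ ≤ ∏ _i : ι, C := prod_le_prod (fun i _ ↦ sum_nonneg fun x _ ↦ hw x) fun i _ ↦ hC _
    _ = C ^ Fintype.card ι := by rw [prod_const, card_univ]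

theorem one_le_rpow_mul_prod_rpow_neg_of_mem_hcGammaSym {s : ℕ} {T a p : ℝ} (ha : 0 < a)
    (hp : 0 ≤ p) {k : Fin s → ℤ} (hk : k ∈ hcGammaSym s T a) :
    1 ≤ T ^ p * ∏ i, (|(k i : ℝ)| + a) ^ (-p) := by
  have hP : 0 < ∏ i, (|(k i : ℝ)| + a) := prod_pos fun i _ ↦ by positivity
  rw [finsetProd_rpow _ _ (fun i _ ↦ by positivity), rpow_neg hP.le,
    le_mul_inv_iff₀ (rpow_pos_of_pos hP _), one_mul]
  exact rpow_le_rpow hP.le hk hp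

theorem card_le_of_subset_hcGammaSym {s : ℕ} {T a μ : ℝ} (ha : 0 < a) (hμ : 0 < μ)
    (hT : 0 ≤ T) {F : Finset (Fin s → ℤ)} (hF : ↑F ⊆ hcGammaSym s T a) :
    (F.card : ℝ) ≤ T ^ (1 + μ) * (a ^ (-(1 + μ)) + 2 * μ⁻¹ * a ^ (-μ)) ^ s := by
  calc (F.card : ℝ) = ∑ _k ∈ F, 1 := by simp
    _ ≤ ∑ k ∈ F, T ^ (1 + μ) * ∏ i, (|(k i : ℝ)| + a) ^ (-(1 + μ)) :=
      sum_le_sum fun k hk ↦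
        one_le_rpow_mul_prod_rpow_neg_of_mem_hcGammaSym ha (by positivity) (hF hk)
    _ = T ^ (1 + μ) * ∑ k ∈ F, ∏ i, (|(k i : ℝ)| + a) ^ (-(1 + μ)) := (mul_sum _ _ _).symm
    _ ≤ T ^ (1 + μ) * (a ^ (-(1 + μ)) + 2 * μ⁻¹ * a ^ (-μ)) ^ s := by
      gcongr
      simpa using sum_prod_apply_le_pow (fun n : ℤ ↦ by positivity) (sum_rpow_abs_add_le hμ ha) F

theorem rpow_neg_one_add_two_div_add_le {a δ : ℝ} (hδ0 : 0 < δ) (hδ1 : δ ≤ 1) (hδa : δ < a) :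
    a ^ (-(1 + 2 / δ)) + δ * a ^ (-(2 / δ)) ≤ (a - δ) ^ (-(2 / δ)) := by
  have ha : 0 < a := hδ0.trans hδa
  have haδ : 0 < a - δ := by linarith
  have bernoulli := one_add_mul_self_le_rpow_one_add (s := δ / (a - δ)) (by
    have := div_pos hδ0 haδ; linarith) (p := 2 / δ) (by rw [le_div_iff₀ hδ0]; linarith)
  rw [show 1 + δ / (a - δ) = a / (a - δ) by field_simp; ring, div_rpow ha.le haδ.le,
    show 2 / δ * (δ / (a - δ)) = 2 / (a - δ) by field_simp] at bernoulli
  have h2 : a⁻¹ + δ ≤ 1 + 2 / (a - δ) := by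
    have : a⁻¹ ≤ 2 / (a - δ) := by
      rw [inv_eq_one_div, div_le_div_iff₀ ha haδ]
      linarith
    linarith
  have hA := rpow_pos_of_pos ha (2 / δ)
  have hE := rpow_pos_of_pos haδ (2 / δ)
  rw [le_div_iff₀ hE] at bernoulli
  rw [neg_add, rpow_add ha, rpow_neg_one, rpow_neg ha.le, rpow_neg haδ.le,
    ← add_mul, ← div_eq_mul_inv, div_le_iff₀ hA, inv_mul_eq_div, le_div_iff₀ hE]
  exact (mul_le_mul_of_nonneg_right h2 hE.le).trans bernoulli

theorem hcGammaSym_card_explicit_general (s : ℕ) (a δ T : ℝ)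
    (hδ0 : 0 < δ) (hδ1 : δ ≤ 1) (hδa : δ < a) (hT : 0 < T) :
    ((hcGammaSym s T a).ncard : ℝ) <
      2 * δ⁻¹ * T ^ (1 + 2 / δ) * (a - δ) ^ (-(2 * s : ℝ) / δ) := by
  have ha : 0 < a := hδ0.trans hδa
  have haδ : 0 < a - δ := by linarith
  have hconst : a ^ (-(1 + 2 / δ)) + 2 * (2 / δ)⁻¹ * a ^ (-(2 / δ)) ≤ (a - δ) ^ (-(2 / δ)) := by
    rw [inv_div, mul_div_cancel₀ _ two_ne_zero]
    exact rpow_neg_one_add_two_div_add_le hδ0 hδ1 hδa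
  have hpow : ((a - δ) ^ (-(2 / δ))) ^ s = (a - δ) ^ (-(2 * s : ℝ) / δ) := by
    rw [← rpow_natCast, ← rpow_mul haδ.le]
    ring_nf
  have hbound (F : Finset (Fin s → ℤ)) (hF : ↑F ⊆ hcGammaSym s T a) :
      (F.card : ℝ) ≤ T ^ (1 + 2 / δ) * (a - δ) ^ (-(2 * s : ℝ) / δ) := by
    refine (card_le_of_subset_hcGammaSym (μ := 2 / δ) ha (by positivity) hT.le hF).trans ?_
    rw [← hpow]
    exact mul_le_mul_of_nonneg_left (pow_le_pow_left₀ (by positivity) hconst s) (by positivity)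
  have hlt : T ^ (1 + 2 / δ) * (a - δ) ^ (-(2 * s : ℝ) / δ) <
      2 * δ⁻¹ * T ^ (1 + 2 / δ) * (a - δ) ^ (-(2 * s : ℝ) / δ) := by
    rw [mul_assoc]
    refine lt_mul_of_one_lt_left (by positivity) ?_
    rw [← div_eq_mul_inv, one_lt_div hδ0]
    linarith
  -- `ncard` of an infinite set is `0`
  by_cases hfin : (hcGammaSym s T a).Finite
  · rw [← hfin.coe_toFinset, Set.ncard_coe_finset]
    exact (hbound _ (by simp)).trans_lt hlt
  · rw [Set.Infinite.ncard hfin, Nat.cast_zero]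
    exact hlt.trans_le' (by positivity)

/-- for `s ∈ ℕ`, `a > 0`, `0 < δ ≤ 1` with `δ < a`, and `T > 0`,
`|Γ_±(s,T,a)| < 2δ⁻¹ · T^(1 + 2/δ) · (a − δ)^(−2s/δ)`. -/
theorem hcGammaSym_card_explicit (s : ℕ) (hs : 1 ≤ s) (a δ T : ℝ) (ha : 0 < a)
    (hδ0 : 0 < δ) (hδ1 : δ ≤ 1) (hδa : δ < a) (hT : 0 < T) :
    ((hcGammaSym s T a).ncard : ℝ) <
      2 * δ⁻¹ * T ^ (1 + 2 / δ) * (a - δ) ^ (-(2 * s : ℝ) / δ) :=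
  hcGammaSym_card_explicit_general s a δ T hδ0 hδ1 hδa hT
end

section
/- Let r > 0, s ∈ ℕ, a > 0, and let U denote the unit ball of the modified Korobov space on 𝕋^s. For any q ∈ [2,∞) with λ := a − 2/q > 0 and every ε ∈ (0,1], the ε-dimension satisfies n_ε(U, L₂(𝕋^s)) ≤ q · λ^{−qs} · ε^{−(1+q)/r}. -/
/-- `λ_a(k) = ∏_j (a + |k_j|)`. -/
noncomputable def lamWeight {s : ℕ} (a : ℝ) (k : Fin s → ℤ) : ℝ :=
  ∏ j, (a + |(k j : ℝ)|)

/-- The `ε`-dimension of a subset `W` of a normed space: the minimal `N` such that some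
complex-linear subspace of dimension `≤ N` approximates every element of `W` within `ε`. -/
noncomputable def epsDim {H : Type*} [NormedAddCommGroup H] [NormedSpace ℂ H]
    (W : Set H) (ε : ℝ) : ℕ :=
  sInf {N : ℕ | ∃ L : Submodule ℂ H, FiniteDimensional ℂ L ∧
    Module.finrank ℂ L ≤ N ∧ ∀ f ∈ W, ∃ g ∈ L, ‖f - g‖ ≤ ε}

/-- The unit ball of the modified Korobov space, viewed inside `ℓ²(ℤ^s)` (identified with
`L₂(𝕋^s)` via the Fourier isometry): `∑_k λ_a(k)^{2r} |f̂(k)|² ≤ 1`. -/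
noncomputable def korobovBall (s : ℕ) (r a : ℝ) :
    Set (lp (fun _ : (Fin s → ℤ) => ℂ) 2) :=
  {f | ∑' k, ENNReal.ofReal (lamWeight a k ^ (2 * r) * ‖f k‖ ^ 2) ≤ 1}

/-!
Truncate the Fourier series to the hyperbolic cross `Γ = {k | λ_a(k) ≤ T}` with `T = ε^(-1/r)`:
off `Γ` the weight `λ_a(k)^(2r)` exceeds `ε^(-2)`, so the discarded tail of an element of the
Korobov ball has `ℓ²`-norm at most `ε`. Counting `Γ` with the weight `(T / λ_a(k))^(1+q) ≥ 1`
gives `#Γ ≤ T^(1+q) ∑_k λ_a(k)^(-(1+q))`; the sum factorizes over the `s` coordinates, and each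
factor `∑_{m ∈ ℤ} (a + |m|)^(-(1+q))` is at most `(a - 2/q)^(-q)` by comparison with the
telescoping differences of `x ↦ x^(-q)` (Bernoulli's inequality).
-/

open Finset

theorem rpow_neg_add_mul_le {x y q : ℝ} (hx : 0 < x) (hxy : x ≤ y) (hq : 1 ≤ q) :
    y ^ (-q) + q * (y - x) * y ^ (-(1 + q)) ≤ x ^ (-q) := by
  have hy : 0 < y := hx.trans_le hxy
  have bernoulli : 1 + q * ((y - x) / x) ≤ (y / x) ^ q := by
    rw [show y / x = 1 + (y - x) / x by field_simp; ring]
    exact one_add_mul_self_le_rpow_one_add (by linarith [div_nonneg (sub_nonneg.2 hxy) hx.le]) hq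
  calc y ^ (-q) + q * (y - x) * y ^ (-(1 + q)) = y ^ (-q) * (1 + q * ((y - x) / y)) := by
        rw [show -(1 + q) = -q + -1 by ring, Real.rpow_add hy, Real.rpow_neg_one]
        field_simp
    _ ≤ y ^ (-q) * (1 + q * ((y - x) / x)) := by
        gcongr
    _ ≤ y ^ (-q) * (y / x) ^ q := by gcongr
    _ = x ^ (-q) := by
        rw [Real.div_rpow hy.le hx.le, Real.rpow_neg hy.le, Real.rpow_neg hx.le]
        field_simp

theorem sum_range_rpow_neg_succ_le {a q : ℝ} (ha : 0 < a) (hq : 1 ≤ q) (M : ℕ) :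
    ∑ n ∈ range M, (a + (n + 1)) ^ (-(1 + q)) ≤ a ^ (-q) / q := by
  have hq0 : 0 < q := by linarith
  rw [le_div_iff₀ hq0, sum_mul]
  calc ∑ n ∈ range M, (a + (n + 1)) ^ (-(1 + q)) * q
      ≤ ∑ n ∈ range M, ((a + n) ^ (-q) - (a + (n + 1 : ℕ)) ^ (-q)) := by
        gcongr with n
        have := rpow_neg_add_mul_le (x := a + n) (y := a + (n + 1)) (by positivity) (by linarith) hq
        push_cast
        linarith
    _ = a ^ (-q) - (a + M) ^ (-q) := by
        rw [sum_range_sub' (fun n : ℕ => (a + n) ^ (-q))]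
        simp
    _ ≤ a ^ (-q) := sub_le_self _ (Real.rpow_nonneg (by positivity) _)

theorem summable_rpow_neg_succ {a q : ℝ} (ha : 0 < a) (hq : 1 ≤ q) :
    Summable fun n : ℕ => (a + (n + 1)) ^ (-(1 + q)) :=
  summable_of_sum_range_le (fun _ => Real.rpow_nonneg (by positivity) _)
    (sum_range_rpow_neg_succ_le ha hq)

theorem tsum_rpow_neg_succ_le {a q : ℝ} (ha : 0 < a) (hq : 1 ≤ q) :
    ∑' n : ℕ, (a + (n + 1)) ^ (-(1 + q)) ≤ a ^ (-q) / q :=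
  Real.tsum_le_of_sum_range_le (fun _ => Real.rpow_nonneg (by positivity) _)
    (sum_range_rpow_neg_succ_le ha hq)

theorem hasSum_int_rpow_neg {a q : ℝ} (ha : 0 < a) (hq : 1 ≤ q) :
    HasSum (fun m : ℤ => (a + |(m : ℝ)|) ^ (-(1 + q)))
      (a ^ (-(1 + q)) + 2 * ∑' n : ℕ, (a + (n + 1)) ^ (-(1 + q))) := by
  have hS := (summable_rpow_neg_succ ha hq).hasSum
  have habs : ∀ n : ℕ, |((-(n + 1) : ℤ) : ℝ)| = n + 1 := fun n => by
    push_cast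
    rw [abs_neg, abs_of_nonneg (by positivity)]
  rw [two_mul, ← add_assoc]
  refine .of_nat_of_neg_add_one ?_ (by simpa only [habs] using hS)
  rw [← hasSum_nat_add_iff' 1]
  have habs' : ∀ n : ℕ, |(n : ℝ) + 1| = n + 1 := fun n => abs_of_nonneg (by positivity)
  simpa [add_assoc, habs'] using hS

theorem sum_int_rpow_neg_le {a q : ℝ} (ha : 0 < a) (hq : 2 ≤ q) (hlam : 0 < a - 2 / q)
    (S : Finset ℤ) : ∑ m ∈ S, (a + |(m : ℝ)|) ^ (-(1 + q)) ≤ (a - 2 / q) ^ (-q) := by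
  have hq0 : 0 < q := by linarith
  refine (sum_le_hasSum S (fun m _ => Real.rpow_nonneg (by positivity) _)
    (hasSum_int_rpow_neg ha (by linarith))).trans ?_
  have htail := tsum_rpow_neg_succ_le ha (by linarith : 1 ≤ q)
  have hstep := rpow_neg_add_mul_le hlam (sub_le_self a (by positivity)) (by linarith : 1 ≤ q)
  rw [show q * (a - (a - 2 / q)) = 2 by field_simp; ring] at hstep
  -- `2/q ≤ 1` fits the two tails `2 a^(-q)/q` under `a^(-q)`, and the centre under `2 a^(-(1+q))`.
  have h2q : 2 * (a ^ (-q) / q) ≤ a ^ (-q) := by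
    rw [← mul_div_assoc, mul_comm, mul_div_assoc]
    exact mul_le_of_le_one_right (Real.rpow_nonneg ha.le _) ((div_le_one hq0).2 hq)
  linarith [Real.rpow_nonneg ha.le (-(1 + q))]

theorem lamWeight_pos {s : ℕ} {a : ℝ} (ha : 0 < a) (k : Fin s → ℤ) : 0 < lamWeight a k :=
  prod_pos fun _ _ => by positivity

theorem sum_lamWeight_rpow_neg_le {s : ℕ} {a q : ℝ} (ha : 0 < a) (hq : 2 ≤ q)
    (hlam : 0 < a - 2 / q) (Γ : Finset (Fin s → ℤ)) :
    ∑ k ∈ Γ, lamWeight a k ^ (-(1 + q)) ≤ (a - 2 / q) ^ (-(q * s)) := by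
  classical
  calc ∑ k ∈ Γ, lamWeight a k ^ (-(1 + q))
      ≤ ∑ k ∈ Fintype.piFinset (fun j => Γ.image (fun k => k j)), lamWeight a k ^ (-(1 + q)) :=
        sum_le_sum_of_subset_of_nonneg
          (fun k hk => Fintype.mem_piFinset.2 fun j => mem_image_of_mem _ hk)
          (fun k _ _ => Real.rpow_nonneg (lamWeight_pos ha k).le _)
    _ = ∏ j, ∑ m ∈ Γ.image (fun k => k j), (a + |((m : ℤ) : ℝ)|) ^ (-(1 + q)) := by
        rw [prod_univ_sum]
        refine sum_congr rfl fun k _ => ?_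
        rw [lamWeight, ← Real.finsetProd_rpow _ _ fun _ _ => by positivity]
    _ ≤ ∏ _j : Fin s, (a - 2 / q) ^ (-q) :=
        prod_le_prod (fun _ _ => sum_nonneg fun _ _ => Real.rpow_nonneg (by positivity) _)
          (fun _ _ => sum_int_rpow_neg_le ha hq hlam _)
    _ = (a - 2 / q) ^ (-(q * s)) := by
        rw [prod_const, card_univ, Fintype.card_fin, ← Real.rpow_natCast,
          ← Real.rpow_mul hlam.le, neg_mul]

theorem card_le_of_forall_lamWeight_le {s : ℕ} {a q T : ℝ} (ha : 0 < a) (hq : 2 ≤ q)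
    (hlam : 0 < a - 2 / q) (hT : 0 ≤ T) {Γ : Finset (Fin s → ℤ)}
    (hΓ : ∀ k ∈ Γ, lamWeight a k ≤ T) :
    (#Γ : ℝ) ≤ T ^ (1 + q) * (a - 2 / q) ^ (-(q * s)) := by
  have hp : 0 ≤ 1 + q := by linarith
  calc (#Γ : ℝ) = ∑ _k ∈ Γ, (1 : ℝ) := by simp
    _ ≤ ∑ k ∈ Γ, T ^ (1 + q) * lamWeight a k ^ (-(1 + q)) := by
        refine sum_le_sum fun k hk => ?_
        have hk0 := lamWeight_pos ha k
        rw [Real.rpow_neg hk0.le, ← div_eq_mul_inv, one_le_div (by positivity)]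
        exact Real.rpow_le_rpow hk0.le (hΓ k hk) hp
    _ = T ^ (1 + q) * ∑ k ∈ Γ, lamWeight a k ^ (-(1 + q)) := (mul_sum _ _ _).symm
    _ ≤ T ^ (1 + q) * (a - 2 / q) ^ (-(q * s)) :=
        mul_le_mul_of_nonneg_left (sum_lamWeight_rpow_neg_le ha hq hlam Γ)
          (Real.rpow_nonneg hT _)

theorem pow_mul_le_lamWeight {s : ℕ} {a : ℝ} (ha : 0 ≤ a) (k : Fin s → ℤ) (j : Fin s) :
    a ^ (s - 1) * (a + |(k j : ℝ)|) ≤ lamWeight a k := by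
  classical
  rw [lamWeight, ← mul_prod_erase univ _ (mem_univ j), mul_comm]
  gcongr
  calc a ^ (s - 1) = ∏ _i ∈ univ.erase j, a := by simp [card_erase_of_mem]
    _ ≤ ∏ i ∈ univ.erase j, (a + |(k i : ℝ)|) :=
        prod_le_prod (fun _ _ => ha) fun _ _ => le_add_of_nonneg_right (abs_nonneg _)

theorem finite_setOf_lamWeight_le {s : ℕ} {a : ℝ} (ha : 0 < a) (T : ℝ) :
    {k : Fin s → ℤ | lamWeight a k ≤ T}.Finite := by
  set M := ⌈T / a ^ (s - 1)⌉
  refine (Set.Finite.pi (t := fun _ => Set.Icc (-M) M) fun _ => Set.finite_Icc _ _).subset ?_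
  intro k hk j _
  have hkj : |(k j : ℝ)| ≤ T / a ^ (s - 1) := by
    rw [le_div_iff₀ (by positivity)]
    nlinarith [pow_mul_le_lamWeight ha.le k j, pow_pos ha (s - 1), Set.mem_ofPred.1 hk]
  rw [Set.mem_Icc, ← abs_le]
  exact_mod_cast hkj.trans (Int.le_ceil _)

theorem epsDim_le_finrank {H : Type*} [NormedAddCommGroup H] [NormedSpace ℂ H] {W : Set H}
    {ε : ℝ} (L : Submodule ℂ H) [FiniteDimensional ℂ L] (hL : ∀ f ∈ W, ∃ g ∈ L, ‖f - g‖ ≤ ε) :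
    epsDim W ε ≤ Module.finrank ℂ L :=
  Nat.sInf_le ⟨L, inferInstance, le_rfl, hL⟩

section WeightedBall

variable {ι E : Type*} [NormedAddCommGroup E]

theorem lp.sub_sum_single_apply [DecidableEq ι] (f : lp (fun _ : ι => E) 2) (Γ : Finset ι)
    (k : ι) : (f - ∑ i ∈ Γ, lp.single 2 i (f i)) k = if k ∈ Γ then 0 else f k := by
  rw [lp.coeFn_sub, Pi.sub_apply, lp.coeFn_sum, Finset.sum_apply]
  simp only [lp.single_apply, Pi.single_apply]
  split_ifs with hk <;> simp [hk]

theorem lp.norm_sub_sum_single_le [DecidableEq ι] (f : lp (fun _ : ι => E) 2) (Γ : Finset ι)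
    (w : ι → ℝ) {ε : ℝ} (hε : 0 ≤ ε) (hw : ∀ k ∉ Γ, 1 ≤ ε ^ 2 * w k)
    (hf : ∑' k, ENNReal.ofReal (w k * ‖f k‖ ^ 2) ≤ 1) :
    ‖f - ∑ k ∈ Γ, lp.single 2 k (f k)‖ ≤ ε := by
  set g := f - ∑ k ∈ Γ, lp.single 2 k (f k)
  have hpt : ∀ k, ENNReal.ofReal (‖g k‖ ^ 2) ≤
      ENNReal.ofReal (ε ^ 2) * ENNReal.ofReal (w k * ‖f k‖ ^ 2) := fun k => by
    rw [← ENNReal.ofReal_mul (by positivity), lp.sub_sum_single_apply]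
    split_ifs with hk
    · simp
    · refine ENNReal.ofReal_le_ofReal ?_
      nlinarith [hw k hk, sq_nonneg ‖f k‖]
  have hsum : ∑' k, ENNReal.ofReal (‖g k‖ ^ 2) ≤ ENNReal.ofReal (ε ^ 2) :=
    calc ∑' k, ENNReal.ofReal (‖g k‖ ^ 2)
        ≤ ∑' k, ENNReal.ofReal (ε ^ 2) * ENNReal.ofReal (w k * ‖f k‖ ^ 2) :=
          ENNReal.tsum_le_tsum hpt
      _ = ENNReal.ofReal (ε ^ 2) * ∑' k, ENNReal.ofReal (w k * ‖f k‖ ^ 2) :=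
          ENNReal.tsum_mul_left
      _ ≤ ENNReal.ofReal (ε ^ 2) := mul_le_of_le_one_right' hf
  have hg : Summable fun k => ‖g k‖ ^ 2 := by
    simpa using (lp.memℓp g).summable (by norm_num)
  refine lp.norm_le_of_tsum_le (by norm_num) hε ?_
  rw [← ENNReal.ofReal_tsum_of_nonneg (fun _ => by positivity) hg] at hsum
  simpa using (ENNReal.ofReal_le_ofReal_iff (by positivity)).1 hsum

theorem epsDim_setOf_tsum_le_one_le_card (w : ι → ℝ) (Γ : Finset ι) {ε : ℝ} (hε : 0 ≤ ε)
    (hw : ∀ k ∉ Γ, 1 ≤ ε ^ 2 * w k) :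
    epsDim {f : lp (fun _ : ι => ℂ) 2 | ∑' k, ENNReal.ofReal (w k * ‖f k‖ ^ 2) ≤ 1} ε ≤ #Γ := by
  classical
  let L := Submodule.span ℂ (Set.range fun k : Γ => lp.single (E := fun _ : ι => ℂ) 2 (k : ι) 1)
  have : FiniteDimensional ℂ L := FiniteDimensional.span_of_finite ℂ (Set.finite_range _)
  have hsingle : ∀ f : lp (fun _ : ι => ℂ) 2, ∑ k ∈ Γ, lp.single 2 k (f k) ∈ L := fun f =>
    sum_mem fun k hk => by
      rw [show f k = f k • (1 : ℂ) from (mul_one _).symm, lp.single_smul]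
      exact Submodule.smul_mem _ _ (Submodule.subset_span ⟨⟨k, hk⟩, rfl⟩)
  calc epsDim _ ε ≤ Module.finrank ℂ L := epsDim_le_finrank L fun f hf =>
        ⟨_, hsingle f, lp.norm_sub_sum_single_le f Γ w hε hw hf⟩
    _ ≤ #Γ := (finrank_range_le_card _).trans (by simp)

end WeightedBall

theorem epsDim_korobov_le_general (s : ℕ) (r a q ε : ℝ) (hr : 0 < r) (ha : 0 < a)
    (hq : 2 ≤ q) (hlam : 0 < a - 2 / q) (hε0 : 0 < ε) :
    (epsDim (korobovBall s r a) ε : ℝ) ≤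
      q * (a - 2 / q) ^ (-(q * s)) * ε ^ (-(1 + q) / r) := by
  set T := ε ^ (-1 / r)
  have hT : 0 < T := Real.rpow_pos_of_pos hε0 _
  set Γ := (finite_setOf_lamWeight_le (s := s) ha T).toFinset
  have hout : ∀ k ∉ Γ, 1 ≤ ε ^ 2 * lamWeight a k ^ (2 * r) := fun k hk => by
    have hTk : T < lamWeight a k := by simpa [Γ] using hk
    calc (1 : ℝ) = ε ^ 2 * T ^ (2 * r) := by
          rw [← Real.rpow_mul hε0.le, div_mul_eq_mul_div, neg_one_mul, neg_div,
            mul_div_cancel_right₀ _ hr.ne', Real.rpow_neg hε0.le, Real.rpow_two]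
          field_simp
      _ ≤ ε ^ 2 * lamWeight a k ^ (2 * r) := by gcongr
  calc (epsDim (korobovBall s r a) ε : ℝ) ≤ #Γ := by
        exact_mod_cast epsDim_setOf_tsum_le_one_le_card _ Γ hε0.le hout
    _ ≤ T ^ (1 + q) * (a - 2 / q) ^ (-(q * s)) :=
        card_le_of_forall_lamWeight_le ha hq hlam hT.le fun k hk => by simpa [Γ] using hk
    _ = 1 * (a - 2 / q) ^ (-(q * s)) * ε ^ (-(1 + q) / r) := by
        rw [← Real.rpow_mul hε0.le]
        ring_nf
    _ ≤ q * (a - 2 / q) ^ (-(q * s)) * ε ^ (-(1 + q) / r) := by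
        gcongr
        linarith

/-- for `r > 0`, `a > 0`, any `q ∈ [2,∞)` with `λ := a − 2/q > 0` and any
`ε ∈ (0,1]`, the ε-dimension of the Korobov unit ball satisfies
`n_ε ≤ q · λ^{−qs} · ε^{−(1+q)/r}`. -/
theorem epsDim_korobov_le (s : ℕ) (hs : 1 ≤ s) (r a q ε : ℝ) (hr : 0 < r) (ha : 0 < a)
    (hq : 2 ≤ q) (hlam : 0 < a - 2 / q) (hε0 : 0 < ε) (hε1 : ε ≤ 1) :
    (epsDim (korobovBall s r a) ε : ℝ) ≤
      q * (a - 2 / q) ^ (-(q * s)) * ε ^ (-(1 + q) / r) :=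
  epsDim_korobov_le_general s r a q ε hr ha hq hlam hε0
end

section
/- For every s ∈ ℕ, T > 0 and a > 0, the cardinality of the corner hyperbolic cross admits the dimension-by-dimension decomposition |Γ(s,T,a)| = ∑_{j=0}^{s} C(s,j) · |Γ(j, T·a^{j−s}, a+1)|, where Γ(s,T,a) := {k ∈ ℕ₀^s : ∏_{i=1}^s (k_i + a) ≤ T}, C(s,j) is the binomial coefficient, and by convention |Γ(0,T',a')| := 1 if T' ≥ 1 appropriately (here the j = 0 term counts the zero vector, contributing 1 when a^s ≤ T and 0 otherwise). -/
/-!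
Split `Γ(s,T,a)` according to the support `S` of `k`. Off `S` every factor equals `a`, which
contributes `a ^ (s - |S|)`; on `S`, writing `k_i = m_i + 1` turns `k_i + a` into `m_i + (a + 1)`
with `m_i ∈ ℕ₀`. Hence the vectors of support `S` correspond bijectively to
`Γ(|S|, T a^(|S| - s), a + 1)`, and each support size `j` occurs for `C(s, j)` sets `S`.
-/

open Finset

lemma mul_pow_card_sub_one_le_prod {ι R : Type*} [Fintype ι] [CommSemiring R] [PartialOrder R]
    [IsOrderedRing R] {f : ι → R} {a : R} (ha : 0 ≤ a)
    (hf : ∀ l, a ≤ f l) (i : ι) : f i * a ^ (Fintype.card ι - 1) ≤ ∏ l, f l := by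
  classical
  rw [← mul_prod_erase univ f (mem_univ i)]
  have hpow : a ^ (Fintype.card ι - 1) ≤ ∏ l ∈ univ.erase i, f l :=
    calc a ^ (Fintype.card ι - 1) = ∏ _ ∈ univ.erase i, a := by simp [card_erase_of_mem]
      _ ≤ ∏ l ∈ univ.erase i, f l := prod_le_prod (fun _ _ => ha) fun l _ => hf l
  exact mul_le_mul_of_nonneg_left hpow (ha.trans (hf i))

lemma Set.Finite.ncard_eq_sum_ncard_inter_preimage {α β : Type*} [Fintype β] {A : Set α}
    (hA : A.Finite) (f : α → β) : A.ncard = ∑ b, (A ∩ f ⁻¹' {b}).ncard := by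
  classical
  rw [Set.ncard_eq_toFinset_card _ hA,
    card_eq_sum_card_fiberwise (f := f) (t := Finset.univ) (by simp)]
  refine sum_congr rfl fun b _ => ?_
  rw [← Set.ncard_coe_finset]
  congr 1
  ext
  simp

lemma mul_rpow_sub_eq_div {a : ℝ} (ha : 0 < a) (T : ℝ) {j s : ℕ} (hjs : j ≤ s) :
    T * a ^ ((j : ℝ) - s) = T / a ^ (s - j) := by
  rw [div_eq_mul_inv, ← Real.rpow_natCast, ← Real.rpow_neg ha.le, Nat.cast_sub hjs, neg_sub]

namespace hcGamma

lemma finite (s : ℕ) (T : ℝ) {a : ℝ} (ha : 0 < a) : (hcGamma s T a).Finite := by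
  refine (Set.finite_Iic (fun _ : Fin s => ⌊T / a ^ (s - 1)⌋₊)).subset fun k hk i => ?_
  have hprod := mul_pow_card_sub_one_le_prod (f := fun l => (k l : ℝ) + a) ha.le
    (fun l => le_add_of_nonneg_left (Nat.cast_nonneg _)) i
  rw [Fintype.card_fin] at hprod
  refine Nat.le_floor ((le_div_iff₀ (by positivity)).2 ?_)
  calc (k i : ℝ) * a ^ (s - 1) ≤ ((k i : ℝ) + a) * a ^ (s - 1) := by gcongr; linarith
    _ ≤ T := hprod.trans hk

variable {s : ℕ}

def supp (k : Fin s → ℕ) : Finset (Fin s) := {i | k i ≠ 0}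

variable (S : Finset (Fin s))

noncomputable def extendSucc (m : Fin #S → ℕ) : Fin s → ℕ :=
  fun i => if h : i ∈ S then m (S.equivFin ⟨i, h⟩) + 1 else 0

lemma extendSucc_injective : Function.Injective (extendSucc S) := by
  intro m m' h
  funext p
  simpa [extendSucc] using congrFun h (S.equivFin.symm p)

lemma range_extendSucc : Set.range (extendSucc S) = supp ⁻¹' {S} := by
  ext k
  constructor
  · rintro ⟨m, rfl⟩
    ext i
    by_cases hi : i ∈ S <;> simp [supp, extendSucc, hi]
  · intro (hk : supp k = S)
    refine ⟨fun p => k (S.equivFin.symm p) - 1, funext fun i => ?_⟩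
    have hki : k i ≠ 0 ↔ i ∈ S := by simp [← hk, supp]
    by_cases hi : i ∈ S
    · simp only [extendSucc, dif_pos hi, Equiv.symm_apply_apply]
      have := hki.2 hi
      omega
    · simpa [extendSucc, hi, eq_comm] using hki.not.2 hi

lemma prod_extendSucc_add (m : Fin #S → ℕ) (a : ℝ) :
    ∏ i, ((extendSucc S m i : ℝ) + a) = (∏ p, ((m p : ℝ) + (a + 1))) * a ^ (s - #S) := by
  rw [← prod_mul_prod_compl S]
  congr 1
  · rw [← prod_coe_sort S]
    refine Fintype.prod_equiv S.equivFin _ _ fun i => ?_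
    simp [extendSucc, add_assoc, add_comm]
  · rw [prod_congr rfl fun i hi => (by simp [extendSucc, mem_compl.1 hi] : _ = a), prod_const,
      card_compl, Fintype.card_fin]

lemma preimage_extendSucc {a : ℝ} (ha : 0 < a) (T : ℝ) :
    extendSucc S ⁻¹' hcGamma s T a = hcGamma #S (T * a ^ ((#S : ℝ) - s)) (a + 1) := by
  ext m
  change ∏ i, ((extendSucc S m i : ℝ) + a) ≤ T ↔
    ∏ p, ((m p : ℝ) + (a + 1)) ≤ T * a ^ ((#S : ℝ) - s)
  rw [prod_extendSucc_add, mul_rpow_sub_eq_div ha T (by simpa using card_le_univ S),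
    le_div_iff₀ (by positivity)]

lemma ncard_inter_supp_preimage {a : ℝ} (ha : 0 < a) (T : ℝ) :
    (hcGamma s T a ∩ supp ⁻¹' {S}).ncard
      = (hcGamma #S (T * a ^ ((#S : ℝ) - s)) (a + 1)).ncard := by
  rw [← range_extendSucc, ← Set.image_preimage_eq_inter_range, preimage_extendSucc S ha,
    Set.ncard_image_of_injective _ (extendSucc_injective S)]

end hcGamma

theorem hcGamma_card_decomposition_general (s : ℕ) (T a : ℝ) (ha : 0 < a) :
    (hcGamma s T a).ncard =
      ∑ j ∈ Finset.range (s + 1),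
        Nat.choose s j * (hcGamma j (T * a ^ ((j : ℝ) - (s : ℝ))) (a + 1)).ncard := by
  rw [(hcGamma.finite s T ha).ncard_eq_sum_ncard_inter_preimage hcGamma.supp]
  simp_rw [hcGamma.ncard_inter_supp_preimage _ ha]
  rw [← powerset_univ,
    sum_powerset_apply_card fun j => (hcGamma j (T * a ^ ((j : ℝ) - s)) (a + 1)).ncard]
  simp

/-- dimension-by-dimension decomposition
`|Γ(s,T,a)| = ∑_{j=0}^{s} C(s,j) · |Γ(j, T·a^{j−s}, a+1)|`.
(For `j = 0` the set `Γ(0, T a^{-s}, a+1)` consists of the empty tuple precisely when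
`a^s ≤ T`, contributing `1` in that case and `0` otherwise.) -/
theorem hcGamma_card_decomposition (s : ℕ) (hs : 1 ≤ s) (T a : ℝ) (hT : 0 < T)
    (ha : 0 < a) :
    (hcGamma s T a).ncard =
      ∑ j ∈ Finset.range (s + 1),
        Nat.choose s j * (hcGamma j (T * a ^ ((j : ℝ) - (s : ℝ))) (a + 1)).ncard :=
  hcGamma_card_decomposition_general s T a ha
end
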